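/- Suppose each f_i : ℝ^d → ℝ is differentiable with ‖∇f_i(x)‖ ≤ G for all x in a convex open set S, and each gradient map ∇f_i is M_i-Lipschitz on S. Then the gradient of the smooth approximation, ∇g_s, is Lipschitz on S with Lipschitz constant s·G² + max_{1≤i≤n} M_i. -/

import Mathlib

open Finset Real InnerProductSpace

section Aux

variable {E : Type*} [NormedAddCommGroup E] [InnerProductSpace ℝ E] [CompleteSpace E]

private lemma mad_le' {n : ℕ} (w a : Fin n → ℝ) (hw : ∀ i, 0 ≤ w i) (hsum : ∑ i, w i = 1)
    {C : ℝ} (hC : 0 ≤ C) (ha : ∀ i, |a i| ≤ C) :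
    ∑ i, w i * |a i - ∑ j, w j * a j| ≤ C := by
  set m := ∑ j, w j * a j with hm
  have key : (∑ i, w i * |a i - m|) ^ 2 ≤ (∑ i : Fin n, w i) * ∑ i, w i * (a i - m) ^ 2 := by
    refine Finset.sum_sq_le_sum_mul_sum_of_sq_eq_mul _ (fun i _ => hw i)
      (fun i _ => mul_nonneg (hw i) (sq_nonneg _)) (fun i _ => ?_)
    rw [mul_pow, sq_abs]; ring
  have var : ∑ i, w i * (a i - m) ^ 2 = (∑ i, w i * a i ^ 2) - m ^ 2 := by
    have : ∀ i, w i * (a i - m) ^ 2 = w i * a i ^ 2 - 2 * m * (w i * a i) + m ^ 2 * w i := by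
      intro i; ring
    simp_rw [this, Finset.sum_add_distrib, Finset.sum_sub_distrib, ← Finset.mul_sum, ← hm, hsum]
    ring
  have hsq : ∑ i, w i * a i ^ 2 ≤ C ^ 2 := by
    calc ∑ i, w i * a i ^ 2 ≤ ∑ i : Fin n, w i * C ^ 2 := by
          refine Finset.sum_le_sum fun i _ => ?_
          have := sq_le_sq' (neg_le_of_abs_le (ha i)) (le_of_abs_le (ha i))
          exact mul_le_mul_of_nonneg_left this (hw i)
      _ = C ^ 2 := by rw [← Finset.sum_mul, hsum, one_mul]
  have h1 : (∑ i, w i * |a i - m|) ^ 2 ≤ C ^ 2 := by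
    rw [hsum, one_mul] at key
    nlinarith [sq_nonneg m]
  have h2 : 0 ≤ ∑ i, w i * |a i - m| :=
    Finset.sum_nonneg fun i _ => mul_nonneg (hw i) (abs_nonneg _)
  nlinarith

private lemma inner_gradient_eq_fderiv' (f : E → ℝ) (z v : E) :
    ⟪gradient f z, v⟫_ℝ = fderiv ℝ f z v := by
  rw [gradient, ← InnerProductSpace.toDual_apply_apply, LinearIsometryEquiv.apply_symm_apply]

private lemma lse_hasGradientAt' {n : ℕ} (hn : 0 < n) (s : ℝ) (hs : s ≠ 0) (f : Fin n → E → ℝ)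
    (hdiff : ∀ i, Differentiable ℝ (f i)) (z : E) :
    HasGradientAt (fun z => (1 / s) * Real.log (∑ i, Real.exp (s * f i z)))
      (∑ i, (Real.exp (s * f i z) / ∑ j, Real.exp (s * f j z)) • gradient (f i) z) z := by
  have hne : Nonempty (Fin n) := ⟨⟨0, hn⟩⟩
  have Hpos : ∀ u : E, (0:ℝ) < ∑ j, Real.exp (s * f j u) :=
    fun u => Finset.sum_pos (fun j _ => Real.exp_pos _) Finset.univ_nonempty
  have hH : HasFDerivAt (fun u => ∑ i, Real.exp (s * f i u))
      (∑ i, Real.exp (s * f i z) • s • fderiv ℝ (f i) z) z :=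
    HasFDerivAt.fun_sum fun i _ => ((hdiff i z).hasFDerivAt.const_mul s).exp
  have hg : HasFDerivAt (fun u => (1 / s) * Real.log (∑ i, Real.exp (s * f i u)))
      ((1 / s) • (∑ j, Real.exp (s * f j z))⁻¹ •
        ∑ i, Real.exp (s * f i z) • s • fderiv ℝ (f i) z) z :=
    (hH.log (Hpos z).ne').const_mul (1 / s)
  have hkey : (InnerProductSpace.toDual ℝ E)
      (∑ i, (Real.exp (s * f i z) / ∑ j, Real.exp (s * f j z)) • gradient (f i) z) =
      (1 / s) • (∑ j, Real.exp (s * f j z))⁻¹ •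
        ∑ i, Real.exp (s * f i z) • s • fderiv ℝ (f i) z := by
    rw [map_sum, Finset.smul_sum, Finset.smul_sum]
    refine Finset.sum_congr rfl fun i _ => ?_
    rw [map_smul, gradient, LinearIsometryEquiv.apply_symm_apply, smul_smul, smul_smul, smul_smul]
    congr 1
    field_simp [(Hpos z).ne']
  rw [hasGradientAt_iff_hasFDerivAt, hkey]
  exact hg

private lemma lse_weight_hasDerivAt' {n : ℕ} (hn : 0 < n) (s : ℝ) (f : Fin n → E → ℝ)
    (hdiff : ∀ i, Differentiable ℝ (f i)) (x y : E) (c : Fin n → ℝ) (t : ℝ) :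
    HasDerivAt (fun t : ℝ => ∑ i, (Real.exp (s * f i (y + t • (x - y))) /
        ∑ j, Real.exp (s * f j (y + t • (x - y)))) * c i)
      (∑ i, s * ((Real.exp (s * f i (y + t • (x - y))) /
          ∑ j, Real.exp (s * f j (y + t • (x - y)))) *
        (fderiv ℝ (f i) (y + t • (x - y)) (x - y) -
          ∑ j, (Real.exp (s * f j (y + t • (x - y))) /
              ∑ j', Real.exp (s * f j' (y + t • (x - y)))) *
            fderiv ℝ (f j) (y + t • (x - y)) (x - y))) * c i) t := by
  have hne : Nonempty (Fin n) := ⟨⟨0, hn⟩⟩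
  have Hpos : ∀ u : E, (0:ℝ) < ∑ j, Real.exp (s * f j u) :=
    fun u => Finset.sum_pos (fun j _ => Real.exp_pos _) Finset.univ_nonempty
  set z := y + t • (x - y) with hz
  obtain ⟨a, ha⟩ : ∃ a : Fin n → ℝ, ∀ i, fderiv ℝ (f i) z (x - y) = a i :=
    ⟨_, fun _ => rfl⟩
  have hγ : HasDerivAt (fun t : ℝ => y + t • (x - y)) (x - y) t := by
    simpa using ((hasDerivAt_id t).smul_const (x - y)).const_add y
  have hfi : ∀ i, HasDerivAt (fun t : ℝ => f i (y + t • (x - y))) (a i) t :=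
    fun i => (ha i) ▸ ((hdiff i z).hasFDerivAt.comp_hasDerivAt t hγ)
  have hexp : ∀ i, HasDerivAt (fun t : ℝ => Real.exp (s * f i (y + t • (x - y))))
      (Real.exp (s * f i z) * (s * a i)) t :=
    fun i => ((hfi i).const_mul s).exp
  have hHt : HasDerivAt (fun t : ℝ => ∑ j, Real.exp (s * f j (y + t • (x - y))))
      (∑ j, Real.exp (s * f j z) * (s * a j)) t :=
    HasDerivAt.fun_sum fun j _ => hexp j
  have hraw : HasDerivAt (fun t : ℝ => ∑ i, (Real.exp (s * f i (y + t • (x - y))) /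
        ∑ j, Real.exp (s * f j (y + t • (x - y)))) * c i)
      (∑ i, ((Real.exp (s * f i z) * (s * a i) * (∑ j, Real.exp (s * f j z)) -
          Real.exp (s * f i z) * ∑ j, Real.exp (s * f j z) * (s * a j)) /
          (∑ j, Real.exp (s * f j z)) ^ 2) * c i) t :=
    HasDerivAt.fun_sum fun i _ => ((hexp i).div hHt (Hpos z).ne').mul_const (c i)
  convert hraw using 1
  refine Finset.sum_congr rfl fun i _ => ?_
  simp only [ha]
  have h1 : ∑ j, (Real.exp (s * f j z) / ∑ j', Real.exp (s * f j' z)) * a j =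
      (∑ j, Real.exp (s * f j z) * a j) / ∑ j', Real.exp (s * f j' z) := by
    simp_rw [div_mul_eq_mul_div, ← Finset.sum_div]
  have h2 : ∑ j, Real.exp (s * f j z) * (s * a j) = s * ∑ j, Real.exp (s * f j z) * a j := by
    rw [Finset.mul_sum]; exact Finset.sum_congr rfl fun j _ => by ring
  rw [h1, h2]
  have hH := (Hpos z).ne'
  field_simp

end Aux

/-- If each `f i : ℝ^d → ℝ` is differentiable with `‖∇f_i(x)‖ ≤ G` on a
convex open set `S`, and each gradient map `∇f_i` is `M i`-Lipschitz on `S`, then the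
gradient of the LogSumExp approximation `g_s x = (1/s) log (∑ i, exp (s * f i x))` is
Lipschitz on `S` with constant `s * G² + max_i M i`. -/
theorem smoothed_max_gradient_lipschitz {d n : ℕ} (hn : 0 < n) (s : ℝ) (hs : 0 < s)
    (f : Fin n → EuclideanSpace ℝ (Fin d) → ℝ)
    (S : Set (EuclideanSpace ℝ (Fin d))) (hS : Convex ℝ S) (hSopen : IsOpen S)
    (hdiff : ∀ i, Differentiable ℝ (f i))
    (G : ℝ) (hgrad : ∀ i, ∀ x ∈ S, ‖gradient (f i) x‖ ≤ G)
    (M : Fin n → ℝ)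
    (hlip : ∀ i, ∀ x ∈ S, ∀ y ∈ S,
      ‖gradient (f i) x - gradient (f i) y‖ ≤ M i * ‖x - y‖) :
    ∀ x ∈ S, ∀ y ∈ S,
      ‖gradient (fun z => (1 / s) * Real.log (∑ i, Real.exp (s * f i z))) x -
          gradient (fun z => (1 / s) * Real.log (∑ i, Real.exp (s * f i z))) y‖ ≤
        (s * G ^ 2 + Finset.univ.sup' (Finset.univ_nonempty_iff.mpr ⟨⟨0, hn⟩⟩) M) *
          ‖x - y‖ := by
  intro x hx y hy
  by_cases hxy : x = y
  · subst hxy; simp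
  have hne : Nonempty (Fin n) := ⟨⟨0, hn⟩⟩
  have Hpos : ∀ u, (0:ℝ) < ∑ j, Real.exp (s * f j u) :=
    fun u => Finset.sum_pos (fun j _ => Real.exp_pos _) Finset.univ_nonempty
  set W : Fin n → EuclideanSpace ℝ (Fin d) → ℝ :=
    fun i z => Real.exp (s * f i z) / ∑ j, Real.exp (s * f j z) with hW
  have hWpos : ∀ i z, 0 ≤ W i z := fun i z => le_of_lt (div_pos (Real.exp_pos _) (Hpos z))
  have hWsum : ∀ z, ∑ i, W i z = 1 := fun z => by
    rw [hW]; simp only [← Finset.sum_div]; exact div_self (Hpos z).ne'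
  have hG0 : 0 ≤ G := le_trans (norm_nonneg _) (hgrad ⟨0, hn⟩ x hx)
  set Mmax := Finset.univ.sup' (Finset.univ_nonempty_iff.mpr ⟨⟨0, hn⟩⟩) M with hMm
  have hM : ∀ i, M i ≤ Mmax := fun i => Finset.le_sup' M (Finset.mem_univ i)
  have hgx := (lse_hasGradientAt' hn s hs.ne' f hdiff x).gradient
  have hgy := (lse_hasGradientAt' hn s hs.ne' f hdiff y).gradient
  rw [hgx, hgy]
  set A := ∑ i, W i x • (gradient (f i) x - gradient (f i) y) with hA
  set B := ∑ i, (W i x - W i y) • gradient (f i) y with hB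
  have hAB : (∑ i, W i x • gradient (f i) x) - (∑ i, W i y • gradient (f i) y) = A + B := by
    rw [hA, hB, ← Finset.sum_add_distrib, ← Finset.sum_sub_distrib]
    exact Finset.sum_congr rfl fun i _ => by module
  have hnormA : ‖A‖ ≤ Mmax * ‖x - y‖ := by
    calc ‖A‖ ≤ ∑ i, ‖W i x • (gradient (f i) x - gradient (f i) y)‖ := norm_sum_le _ _
      _ = ∑ i, W i x * ‖gradient (f i) x - gradient (f i) y‖ := by
          refine Finset.sum_congr rfl fun i _ => ?_
          rw [norm_smul, Real.norm_eq_abs, abs_of_nonneg (hWpos i x)]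
      _ ≤ ∑ i, W i x * (Mmax * ‖x - y‖) := by
          refine Finset.sum_le_sum fun i _ => ?_
          refine mul_le_mul_of_nonneg_left (le_trans (hlip i x hx y hy) ?_) (hWpos i x)
          exact mul_le_mul_of_nonneg_right (hM i) (norm_nonneg _)
      _ = Mmax * ‖x - y‖ := by rw [← Finset.sum_mul, hWsum, one_mul]
  have hnormB : ‖B‖ ≤ s * G ^ 2 * ‖x - y‖ := by
    rcases eq_or_ne B 0 with hB0 | hB0
    · rw [hB0, norm_zero]; positivity
    set e := ‖B‖⁻¹ • B with he
    have hBn : ‖B‖ ≠ 0 := norm_ne_zero_iff.mpr hB0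
    have hnorme : ‖e‖ = 1 := by
      rw [he, norm_smul, norm_inv, norm_norm, inv_mul_cancel₀ hBn]
    have hBe : ⟪B, e⟫_ℝ = ‖B‖ := by
      rw [he, real_inner_smul_right, real_inner_self_eq_norm_sq]
      field_simp
    set c : Fin n → ℝ := fun i => ⟪gradient (f i) y, e⟫_ℝ with hc
    have hcG : ∀ i, |c i| ≤ G := fun i => by
      calc |c i| ≤ ‖gradient (f i) y‖ * ‖e‖ := abs_real_inner_le_norm _ _
        _ = ‖gradient (f i) y‖ := by rw [hnorme, mul_one]
        _ ≤ G := hgrad i y hy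
    have hBsum : ‖B‖ = ∑ i, (W i x - W i y) * c i := by
      rw [← hBe, hB, sum_inner]
      exact Finset.sum_congr rfl fun i _ => by rw [real_inner_smul_left]
    -- MVT along the segment from y to x
    set ψ : ℝ → ℝ := fun t => ∑ i, (Real.exp (s * f i (y + t • (x - y))) /
        ∑ j, Real.exp (s * f j (y + t • (x - y)))) * c i with hψ
    set D : ℝ → ℝ := fun t => ∑ i, s * ((Real.exp (s * f i (y + t • (x - y))) /
          ∑ j, Real.exp (s * f j (y + t • (x - y)))) *
        (fderiv ℝ (f i) (y + t • (x - y)) (x - y) -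
          ∑ j, (Real.exp (s * f j (y + t • (x - y))) /
              ∑ j', Real.exp (s * f j' (y + t • (x - y)))) *
            fderiv ℝ (f j) (y + t • (x - y)) (x - y))) * c i with hD
    have hderiv : ∀ t ∈ Set.Icc (0:ℝ) 1, HasDerivWithinAt ψ (D t) (Set.Icc (0:ℝ) 1) t :=
      fun t _ => (lse_weight_hasDerivAt' hn s f hdiff x y c t).hasDerivWithinAt
    have hmem : ∀ t ∈ Set.Icc (0:ℝ) 1, y + t • (x - y) ∈ S := by
      intro t ht
      have h1 : y + t • (x - y) = (1 - t) • y + t • x := by module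
      rw [h1]
      exact hS hy hx (by linarith [ht.2]) ht.1 (by ring)
    have hbound : ∀ t ∈ Set.Ico (0:ℝ) 1, ‖D t‖ ≤ s * G ^ 2 * ‖x - y‖ := by
      intro t ht
      have htI : t ∈ Set.Icc (0:ℝ) 1 := ⟨ht.1, le_of_lt ht.2⟩
      set z := y + t • (x - y) with hz
      have hzS : z ∈ S := hmem t htI
      obtain ⟨a, ha⟩ : ∃ a : Fin n → ℝ, ∀ i, fderiv ℝ (f i) z (x - y) = a i :=
        ⟨_, fun _ => rfl⟩
      have haG : ∀ i, |a i| ≤ G * ‖x - y‖ := fun i => by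
        rw [← ha i, ← inner_gradient_eq_fderiv']
        calc |⟪gradient (f i) z, x - y⟫_ℝ| ≤ ‖gradient (f i) z‖ * ‖x - y‖ :=
              abs_real_inner_le_norm _ _
          _ ≤ G * ‖x - y‖ := mul_le_mul_of_nonneg_right (hgrad i z hzS) (norm_nonneg _)
      have hDt : D t = ∑ i, s * (W i z * (a i - ∑ j, W j z * a j)) * c i := by
        rw [hD]
        exact Finset.sum_congr rfl fun i _ => by rw [ha]; simp only [← hz, ha, hW]
      rw [Real.norm_eq_abs, hDt]
      calc |∑ i, s * (W i z * (a i - ∑ j, W j z * a j)) * c i|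
          ≤ ∑ i, |s * (W i z * (a i - ∑ j, W j z * a j)) * c i| :=
            Finset.abs_sum_le_sum_abs _ _
        _ = ∑ i, s * (W i z * |a i - ∑ j, W j z * a j|) * |c i| := by
            refine Finset.sum_congr rfl fun i _ => ?_
            rw [abs_mul, abs_mul, abs_mul, abs_of_nonneg hs.le, abs_of_nonneg (hWpos i z)]
        _ ≤ ∑ i, s * (W i z * |a i - ∑ j, W j z * a j|) * G := by
            refine Finset.sum_le_sum fun i _ => ?_
            refine mul_le_mul_of_nonneg_left (hcG i) ?_
            have := hWpos i z
            exact mul_nonneg hs.le (mul_nonneg this (abs_nonneg _))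
        _ = (s * G) * ∑ i, W i z * |a i - ∑ j, W j z * a j| := by
            rw [Finset.mul_sum]
            exact Finset.sum_congr rfl fun i _ => by ring
        _ ≤ (s * G) * (G * ‖x - y‖) := by
            refine mul_le_mul_of_nonneg_left ?_ (by positivity)
            exact mad_le' (fun i => W i z) a (fun i => hWpos i z) (hWsum z)
              (by positivity) haG
        _ = s * G ^ 2 * ‖x - y‖ := by ring
    have hmvt := norm_image_sub_le_of_norm_deriv_le_segment' hderiv hbound 1
      (Set.right_mem_Icc.mpr zero_le_one)
    have hψ1 : ψ 1 = ∑ i, W i x * c i := by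
      rw [hψ]; simp [hW]
    have hψ0 : ψ 0 = ∑ i, W i y * c i := by
      rw [hψ]; simp [hW]
    have hfinal : ‖B‖ = ψ 1 - ψ 0 := by
      rw [hψ1, hψ0, hBsum, ← Finset.sum_sub_distrib]
      exact Finset.sum_congr rfl fun i _ => by ring
    calc ‖B‖ = ψ 1 - ψ 0 := hfinal
      _ ≤ |ψ 1 - ψ 0| := le_abs_self _
      _ = ‖ψ 1 - ψ 0‖ := (Real.norm_eq_abs _).symm
      _ ≤ s * G ^ 2 * ‖x - y‖ * (1 - 0) := hmvt
      _ = s * G ^ 2 * ‖x - y‖ := by ring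
  calc ‖(∑ i, W i x • gradient (f i) x) - ∑ i, W i y • gradient (f i) y‖
      = ‖A + B‖ := by rw [hAB]
    _ ≤ ‖A‖ + ‖B‖ := norm_add_le _ _
    _ ≤ Mmax * ‖x - y‖ + s * G ^ 2 * ‖x - y‖ := add_le_add hnormA hnormB
    _ = (s * G ^ 2 + Mmax) * ‖x - y‖ := by ring
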